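/- Let G be a finite simple graph on vertex set V with distinguished depot 0, and x : E → {0,1} an edge selection. Suppose for every subset S ⊆ V with 0 ∈ S and every vertex i ∉ S that is 'visited' (z_i = 1), the number of selected edges in the cut δ(S) is at least 2. Then every visited vertex i lies in a connected component of the selected subgraph that contains the depot 0. -/

import Mathlib

open Finset

/- If `u` does not reach `v`, apply the hypothesis to the set of vertices reaching `v`: an edge
leaving it, read backwards, would extend a path into it. -/
theorem reflTransGen_of_forall_cut {V : Type*} [Fintype V] {R : V → V → Prop}
    (hR : ∀ a b, R a b → R b a) {u v : V}
    (hcut : ∀ S : Finset V, v ∈ S → u ∉ S → ∃ a ∈ S, ∃ b ∉ S, R a b) :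
    Relation.ReflTransGen R u v := by
  classical
  by_contra huv
  obtain ⟨a, ha, b, hb, hab⟩ :=
    hcut {w | Relation.ReflTransGen R w v} (by simp [Relation.ReflTransGen.refl]) (by simpa)
  simp only [mem_filter, mem_univ, true_and] at ha hb
  exact hb (.head (hR a b hab) ha)

theorem stmt10_general {V : Type*} [Fintype V] [DecidableEq V] (v0 : V)
    (x : V → V → ℕ) (z : V → ℕ)
    (hxbin : ∀ a b, x a b ≤ 1)
    (hsymm : ∀ a b, x a b = x b a)
    (hcut : ∀ S : Finset V, v0 ∈ S → ∀ i ∉ S,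
      ∑ a ∈ S, ∑ b ∈ Sᶜ, x a b ≥ 2 * z i) :
    ∀ i, z i = 1 →
      Relation.ReflTransGen (fun a b => x a b = 1) i v0 := by
  intro i hzi
  refine reflTransGen_of_forall_cut (fun a b h => (hsymm b a).trans h) fun S hv0 hi => ?_
  have hcross : ∑ a ∈ S, ∑ b ∈ Sᶜ, x a b ≠ 0 := by
    have := hcut S hv0 i hi
    omega
  obtain ⟨a, ha, hna⟩ := exists_ne_zero_of_sum_ne_zero hcross
  obtain ⟨b, hb, hab⟩ := exists_ne_zero_of_sum_ne_zero hna
  exact ⟨a, ha, b, mem_compl.mp hb, le_antisymm (hxbin a b) (Nat.one_le_iff_ne_zero.mpr hab)⟩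

open Finset in
/-- Cut-form subtour elimination implies connectivity to the depot:
if every cut separating a visited vertex `i` from the depot contains at
least two selected edges, then every visited vertex is connected to the
depot in the selected subgraph. -/
theorem stmt10 {V : Type*} [Fintype V] [DecidableEq V] (v0 : V)
    (x : V → V → ℕ) (z : V → ℕ)
    (hxbin : ∀ a b, x a b ≤ 1) (hzbin : ∀ i, z i ≤ 1)
    (hsymm : ∀ a b, x a b = x b a)
    (hcut : ∀ S : Finset V, v0 ∈ S → ∀ i ∉ S,
      ∑ a ∈ S, ∑ b ∈ Sᶜ, x a b ≥ 2 * z i) :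
    ∀ i, z i = 1 →
      Relation.ReflTransGen (fun a b => x a b = 1) i v0 :=
  stmt10_general v0 x z hxbin hsymm hcut
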